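/- arXiv:2508.21749 — 3 statements merged into one kernel-verified Lean document; each statement's English description precedes it below -/
import Mathlib

section
/- For all positive integers n and r, (2n + 4r - 3)!! / r! <= n! * (r-1)! * 2^(2n + 6r - 3). -/
/-- The double factorial `(2k-1)!! = 1 * 3 * 5 * ... * (2k-1)`. -/
def oddFactorial (k : ℕ) : ℕ := ∏ i ∈ Finset.range k, (2 * i + 1)

lemma choose_le_two_pow' (m k : ℕ) : m.choose k ≤ 2 ^ m := by
  rcases le_or_gt k m with h | h
  · calc m.choose k ≤ ∑ i ∈ Finset.range (m + 1), m.choose i :=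
        Finset.single_le_sum (fun i _ => Nat.zero_le _) (Finset.mem_range.2 (Nat.lt_succ_of_le h))
      _ = 2 ^ m := Nat.sum_range_choose m
  · simp [Nat.choose_eq_zero_of_lt h]

lemma oddFactorial_le (k : ℕ) : oddFactorial k ≤ 2 ^ k * k.factorial := by
  induction k with
  | zero => simp [oddFactorial]
  | succ k ih =>
    rw [oddFactorial, Finset.prod_range_succ, ← oddFactorial]
    calc oddFactorial k * (2 * k + 1) ≤ (2 ^ k * k.factorial) * (2 * (k + 1)) :=
          Nat.mul_le_mul ih (by omega)
      _ = 2 ^ (k + 1) * (k + 1).factorial := by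
          rw [Nat.factorial_succ]; ring

lemma fact_split (a b : ℕ) : (a + b).factorial ≤ 2 ^ (a + b) * (a.factorial * b.factorial) := by
  calc (a + b).factorial = (a + b).choose a * a.factorial * b.factorial := by
        have := Nat.choose_mul_factorial_mul_factorial (Nat.le_add_right a b)
        rw [Nat.add_sub_cancel_left] at this
        omega
    _ ≤ 2 ^ (a + b) * a.factorial * b.factorial :=
        Nat.mul_le_mul_right _ (Nat.mul_le_mul_right _ (choose_le_two_pow' _ _))
    _ = 2 ^ (a + b) * (a.factorial * b.factorial) := by ring

/-- `(2n+4r-3)!! / r! ≤ n! * (r-1)! * 2^(2n+6r-3)`;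
note `(2n+4r-3)!! = oddFactorial (n + 2r - 1)`. -/
theorem stmt_9 (n r : ℕ) (hn : 1 ≤ n) (hr : 1 ≤ r) :
    (oddFactorial (n + 2 * r - 1) : ℚ) / Nat.factorial r
      ≤ Nat.factorial n * Nat.factorial (r - 1) * 2 ^ (2 * n + 6 * r - 3) := by
  rw [div_le_iff₀ (by positivity)]
  have key : oddFactorial (n + 2 * r - 1) ≤
      (Nat.factorial n * Nat.factorial (r - 1) * 2 ^ (2 * n + 6 * r - 3)) * Nat.factorial r := by
    have h1 : n + 2 * r - 1 = n + (2 * r - 1) := by omega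
    have h2 : 2 * r - 1 = r + (r - 1) := by omega
    calc oddFactorial (n + 2 * r - 1)
        ≤ 2 ^ (n + 2 * r - 1) * (n + 2 * r - 1).factorial := oddFactorial_le _
      _ ≤ 2 ^ (n + 2 * r - 1) * (2 ^ (n + (2 * r - 1)) *
            (n.factorial * (2 * r - 1).factorial)) := by
          rw [h1]; exact Nat.mul_le_mul_left _ (fact_split n (2 * r - 1))
      _ ≤ 2 ^ (n + 2 * r - 1) * (2 ^ (n + (2 * r - 1)) *
            (n.factorial * (2 ^ (r + (r - 1)) * (r.factorial * (r - 1).factorial)))) := by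
          refine Nat.mul_le_mul_left _ (Nat.mul_le_mul_left _ (Nat.mul_le_mul_left _ ?_))
          rw [h2]; exact fact_split r (r - 1)
      _ = (Nat.factorial n * Nat.factorial (r - 1) *
            (2 ^ (n + 2 * r - 1) * 2 ^ (n + (2 * r - 1)) * 2 ^ (r + (r - 1)))) *
            Nat.factorial r := by ring
      _ = (Nat.factorial n * Nat.factorial (r - 1) * 2 ^ (2 * n + 6 * r - 3)) * Nat.factorial r := by
          rw [← pow_add, ← pow_add]
          congr 3
          omega
  exact_mod_cast key
end

section
/- Let n >= 6 and t >= 1 be integers and suppose r is a positive integer with n + r <= t*n such that (n/2)^(t*n) * t^(-t) < 2^(r*t) * n! * (r-1)! * 2^(2n + 6r - 3). Then r > ((t-1)*n*lg n - 6*t*n - t*lg t) / (lg n + t + lg t). -/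
/-!
Take base-2 logarithms. Bounding `n! ≤ n ^ n` and, by AM-GM, `(r - 1)! ≤ (r / 2) ^ (r - 1)`, so that
`(r - 1)! * 2 ^ r ≤ (t * n) ^ r`, the hypothesis becomes
`t n (lg n - 1) - t lg t < r t + n lg n + r (lg t + lg n) + 2 n + 5 r`,
which is linear in `r`. Solving for `r` costs at most `t n + 2 n + 5 r`, and `n + r ≤ t n` bounds
this by `6 t n`.
-/

open Real

namespace Nat

theorem two_mul_pow_self_le_add_one_pow {k : ℕ} (hk : 1 ≤ k) : 2 * k ^ k ≤ (k + 1) ^ k := by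
  obtain ⟨j, rfl⟩ : ∃ j, k = j + 1 := ⟨k - 1, by omega⟩
  have := pow_add_mul_le_add_pow (a := j + 1) (b := 1) (Nat.zero_le _) (by omega) (j + 1)
  simpa [← pow_succ', two_mul] using this

theorem factorial_mul_two_pow_le_add_one_pow (m : ℕ) : m ! * 2 ^ m ≤ (m + 1) ^ m := by
  induction m with
  | zero => simp
  | succ m ih =>
    calc (m + 1)! * 2 ^ (m + 1) = 2 * (m + 1) * (m ! * 2 ^ m) := by
          rw [factorial_succ, pow_succ]; ring
      _ ≤ 2 * (m + 1) * (m + 1) ^ m := by gcongr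
      _ = 2 * (m + 1) ^ (m + 1) := by ring
      _ ≤ (m + 1 + 1) ^ (m + 1) := two_mul_pow_self_le_add_one_pow (by omega)

theorem factorial_sub_one_mul_two_pow_le_pow {r N : ℕ} (hrN : r ≤ N) (hN : 2 ≤ N) :
    (r - 1)! * 2 ^ r ≤ N ^ r := by
  cases r with
  | zero => simp
  | succ m =>
    calc (m + 1 - 1)! * 2 ^ (m + 1) = m ! * 2 ^ m * 2 := by simp [pow_succ, mul_assoc]
      _ ≤ N ^ m * N := by
          gcongr
          exact (factorial_mul_two_pow_le_add_one_pow m).trans (Nat.pow_le_pow_left hrN m)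
      _ = N ^ (m + 1) := (pow_succ N m).symm

theorem factorial_mul_factorial_sub_one_mul_two_pow_le {n r N : ℕ} (hrN : r ≤ N) (hN : 2 ≤ N) :
    n ! * (r - 1)! * 2 ^ (2 * n + 6 * r - 3) ≤ n ^ n * N ^ r * 2 ^ (2 * n + 5 * r) :=
  calc n ! * (r - 1)! * 2 ^ (2 * n + 6 * r - 3)
      ≤ n ! * (r - 1)! * 2 ^ (r + (2 * n + 5 * r)) := by gcongr <;> omega
    _ = n ! * ((r - 1)! * 2 ^ r) * 2 ^ (2 * n + 5 * r) := by ring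
    _ ≤ n ^ n * N ^ r * 2 ^ (2 * n + 5 * r) := by
        gcongr
        exacts [factorial_le_pow n, factorial_sub_one_mul_two_pow_le_pow hrN hN]

end Nat

theorem logb_two_lt_of_count_lt {n t r : ℕ} (hn : 0 < n) (ht : 0 < t)
    (h : ((n : ℝ) / 2) ^ (t * n) * ((t : ℝ) ^ t)⁻¹
      < 2 ^ (r * t) * (n : ℝ) ^ n * ((t : ℝ) * n) ^ r * 2 ^ (2 * n + 5 * r)) :
    t * n * (logb 2 n - 1) - t * logb 2 t
      < r * t + n * logb 2 n + r * (logb 2 t + logb 2 n) + (2 * n + 5 * r) := by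
  rw [← logb_lt_logb_iff one_lt_two (by positivity) (by positivity)] at h
  simp (disch := positivity) only [logb_mul, logb_pow, logb_div, logb_inv,
    logb_self_eq_one one_lt_two] at h
  push_cast at h
  linarith

theorem stmt_13_general (n t r : ℕ) (hr : 1 ≤ r)
    (hrt : n + r ≤ t * n)
    (h : ((n : ℝ) / 2) ^ (t * n) * ((t : ℝ) ^ t)⁻¹
        < 2 ^ (r * t) * Nat.factorial n * Nat.factorial (r - 1) * 2 ^ (2 * n + 6 * r - 3)) :
    (r : ℝ) > (((t : ℝ) - 1) * n * logb 2 n - 6 * t * n - t * logb 2 t)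
        / (logb 2 n + t + logb 2 t) := by
  have hn : 0 < n := Nat.pos_of_ne_zero fun hn0 => by simp [hn0] at hrt; omega
  have ht : 0 < t := Nat.pos_of_ne_zero fun ht0 => by simp [ht0] at hrt; omega
  have hfact : (n.factorial * (r - 1).factorial * 2 ^ (2 * n + 6 * r - 3) : ℝ)
      ≤ n ^ n * (t * n) ^ r * 2 ^ (2 * n + 5 * r) := by
    exact_mod_cast Nat.factorial_mul_factorial_sub_one_mul_two_pow_le (n := n) (r := r)
      (N := t * n) (by omega) (by nlinarith)
  have hlog := logb_two_lt_of_count_lt hn ht <| h.trans_le <|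
    calc (2 : ℝ) ^ (r * t) * n.factorial * (r - 1).factorial * 2 ^ (2 * n + 6 * r - 3)
        = 2 ^ (r * t) * (n.factorial * (r - 1).factorial * 2 ^ (2 * n + 6 * r - 3)) := by ring
      _ ≤ 2 ^ (r * t) * (n ^ n * (t * n) ^ r * 2 ^ (2 * n + 5 * r)) := by gcongr
      _ = 2 ^ (r * t) * n ^ n * (t * n) ^ r * 2 ^ (2 * n + 5 * r) := by ring
  have hL : 0 ≤ logb 2 (n : ℝ) := logb_nonneg one_lt_two (by exact_mod_cast hn)
  have hT : 0 ≤ logb 2 (t : ℝ) := logb_nonneg one_lt_two (by exact_mod_cast ht)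
  have hrt' : (n : ℝ) + r ≤ t * n := by exact_mod_cast hrt
  rw [gt_iff_lt, div_lt_iff₀ (by positivity)]
  linarith

theorem stmt_13 (n t r : ℕ) (hn : 6 ≤ n) (ht : 1 ≤ t) (hr : 1 ≤ r)
    (hrt : n + r ≤ t * n)
    (h : ((n : ℝ) / 2) ^ (t * n) * ((t : ℝ) ^ t)⁻¹
        < 2 ^ (r * t) * Nat.factorial n * Nat.factorial (r - 1) * 2 ^ (2 * n + 6 * r - 3)) :
    (r : ℝ) > (((t : ℝ) - 1) * n * logb 2 n - 6 * t * n - t * logb 2 t)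
        / (logb 2 n + t + logb 2 t) :=
  stmt_13_general n t r hr hrt h
end

section
/- Let n >= 6 and t >= 1 be integers and suppose r >= 2 is an integer with n + r <= t*n such that ((n-1)/2)^(t*(n-1)) * t^(-t) < 2^((t+2)*(n + 3r - 3)) * n! * (r-2)!. Then r > ((t-1)*n*lg n - t*(8n + lg n + lg t - 1)) / (lg n + 3t + lg t). -/
open Real

theorem stmt_18 (n t r : ℕ) (hn : 6 ≤ n) (ht : 1 ≤ t) (hr : 2 ≤ r)
    (hrt : n + r ≤ t * n)
    (h : (((n : ℝ) - 1) / 2) ^ (t * (n - 1)) * ((t : ℝ) ^ t)⁻¹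
        < 2 ^ ((t + 2) * (n + 3 * r - 3)) * Nat.factorial n * Nat.factorial (r - 2)) :
    (r : ℝ) > (((t : ℝ) - 1) * n * logb 2 n - t * (8 * n + logb 2 n + logb 2 t - 1))
        / (logb 2 n + 3 * t + logb 2 t) := by
  have hn6 : (6:ℝ) ≤ n := by exact_mod_cast hn
  have ht1 : (1:ℝ) ≤ t := by exact_mod_cast ht
  have hr2 : (2:ℝ) ≤ r := by exact_mod_cast hr
  have hrt' : (n:ℝ) + r ≤ t * n := by exact_mod_cast hrt
  have hnpos : (0:ℝ) < n := by linarith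
  have htpos : (0:ℝ) < t := by linarith
  have h12 : (1:ℝ) < 2 := one_lt_two
  have hN1 : (0:ℝ) < (n:ℝ) - 1 := by linarith
  have hN1' : (n:ℝ) - 1 ≠ 0 := ne_of_gt hN1
  set a := logb 2 (n:ℝ) with ha
  set b := logb 2 (t:ℝ) with hb
  set c := logb 2 ((n:ℝ) - 1) with hc
  have hlgn2 : (2:ℝ) ≤ a := by
    have h4 : (4:ℝ) ≤ n := by linarith
    have : logb 2 (4:ℝ) ≤ a := Real.logb_le_logb_of_le h12 (by norm_num) h4
    have e4 : logb 2 (4:ℝ) = 2 := by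
      rw [show (4:ℝ) = 2 ^ (2:ℕ) by norm_num, Real.logb_pow,
        Real.logb_self_eq_one h12]
      norm_num
    linarith
  have hlgt0 : 0 ≤ b := Real.logb_nonneg h12 ht1
  have hden : 0 < a + 3 * t + b := by linarith
  rw [gt_iff_lt, div_lt_iff₀ hden]
  -- take base-2 logs of h
  have hLpos : (0:ℝ) < (((n : ℝ) - 1) / 2) ^ (t * (n - 1)) * ((t : ℝ) ^ t)⁻¹ := by
    positivity
  have hlog := Real.logb_lt_logb (b := 2) h12 hLpos h
  have e1 : logb 2 ((((n : ℝ) - 1) / 2) ^ (t * (n - 1)) * ((t : ℝ) ^ t)⁻¹)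
      = (t * (n - 1) : ℕ) * (c - 1) - t * b := by
    rw [Real.logb_mul (by positivity) (by positivity), Real.logb_pow, Real.logb_inv,
      Real.logb_pow, Real.logb_div hN1' (by norm_num), Real.logb_self_eq_one h12]
    ring
  have e2 : logb 2 ((2:ℝ) ^ ((t + 2) * (n + 3 * r - 3)) * Nat.factorial n
      * Nat.factorial (r - 2))
      = ((t + 2) * (n + 3 * r - 3) : ℕ) + logb 2 (Nat.factorial n : ℝ)
        + logb 2 (Nat.factorial (r - 2) : ℝ) := by
    rw [Real.logb_mul (by positivity) (Nat.cast_ne_zero.mpr (Nat.factorial_ne_zero _)),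
      Real.logb_mul (by positivity) (Nat.cast_ne_zero.mpr (Nat.factorial_ne_zero _)),
      Real.logb_pow, Real.logb_self_eq_one h12]
    ring
  rw [e1, e2] at hlog
  -- bound the factorial logs
  have hF1 : logb 2 (Nat.factorial n : ℝ) ≤ n * a := by
    have hfac : (Nat.factorial n : ℝ) ≤ (n:ℝ) ^ n := by
      exact_mod_cast Nat.factorial_le_pow n
    have := Real.logb_le_logb_of_le h12
      (by exact_mod_cast Nat.factorial_pos n) hfac
    rwa [Real.logb_pow] at this
  have hF2 : logb 2 (Nat.factorial (r - 2) : ℝ) ≤ r * (b + a) := by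
    have hfacN : Nat.factorial (r - 2) ≤ (t * n) ^ r := by
      calc Nat.factorial (r - 2) ≤ (r - 2) ^ (r - 2) := Nat.factorial_le_pow _
        _ ≤ (t * n) ^ (r - 2) := Nat.pow_le_pow_left (by omega) _
        _ ≤ (t * n) ^ r := Nat.pow_le_pow_right (by nlinarith [hn, ht]) (by omega)
    have hfac : (Nat.factorial (r - 2) : ℝ) ≤ ((t:ℝ) * n) ^ r := by
      exact_mod_cast hfacN
    have := Real.logb_le_logb_of_le h12
      (by exact_mod_cast Nat.factorial_pos (r - 2)) hfac
    rwa [Real.logb_pow, Real.logb_mul (ne_of_gt htpos) (ne_of_gt hnpos), ← hb, ← ha]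
      at this
  -- bound a - c
  have hkey : a ≤ c + 2 / ((n:ℝ) - 1) := by
    have hlog2 : (0.6931471803:ℝ) < Real.log 2 := Real.log_two_gt_d9
    have hq : (0:ℝ) < (n:ℝ) / ((n:ℝ) - 1) := by positivity
    have h1 : Real.log ((n:ℝ) / ((n:ℝ) - 1)) ≤ 1 / ((n:ℝ) - 1) := by
      have := Real.log_le_sub_one_of_pos hq
      have e : (n:ℝ) / ((n:ℝ) - 1) - 1 = 1 / ((n:ℝ) - 1) := by field_simp; ring
      linarith
    have h2 : Real.log ((n:ℝ) / ((n:ℝ) - 1)) = Real.log n - Real.log ((n:ℝ) - 1) :=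
      Real.log_div (ne_of_gt hnpos) hN1'
    have hac : a - c = (Real.log n - Real.log ((n:ℝ) - 1)) / Real.log 2 := by
      rw [ha, hc, Real.logb, Real.logb]; ring
    have h3 : a - c ≤ (1 / ((n:ℝ) - 1)) / Real.log 2 := by
      rw [hac, ← h2]
      exact div_le_div_of_nonneg_right h1 (by linarith) |>.trans_eq rfl
    have h4 : (1 / ((n:ℝ) - 1)) / Real.log 2 ≤ 2 / ((n:ℝ) - 1) := by
      rw [div_le_div_iff₀ (by linarith) hN1]
      have e0 : 1 / ((n:ℝ) - 1) * ((n:ℝ) - 1) = 1 := div_mul_cancel₀ _ hN1'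
      linarith
    linarith
  have hF3 : (t:ℝ) * ((n:ℝ) - 1) * a ≤ (t:ℝ) * ((n:ℝ) - 1) * c + 2 * t := by
    have h0 : (0:ℝ) ≤ (t:ℝ) * ((n:ℝ) - 1) := by positivity
    have := mul_le_mul_of_nonneg_left hkey h0
    have e0 : 2 / ((n:ℝ) - 1) * ((n:ℝ) - 1) = 2 := div_mul_cancel₀ _ hN1'
    have e : (t:ℝ) * ((n:ℝ) - 1) * (c + 2 / ((n:ℝ) - 1))
        = (t:ℝ) * ((n:ℝ) - 1) * c + 2 * t := by
      calc (t:ℝ) * ((n:ℝ) - 1) * (c + 2 / ((n:ℝ) - 1))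
          = (t:ℝ) * ((n:ℝ) - 1) * c + (t:ℝ) * (2 / ((n:ℝ) - 1) * ((n:ℝ) - 1)) := by
            ring
        _ = (t:ℝ) * ((n:ℝ) - 1) * c + 2 * t := by rw [e0]; ring
    linarith [e ▸ this]
  -- put casts in real form
  have hc1 : ((t * (n - 1) : ℕ) : ℝ) = (t:ℝ) * ((n:ℝ) - 1) := by
    push_cast [Nat.cast_sub (show 1 ≤ n by omega)]; ring
  have hc2 : (((t + 2) * (n + 3 * r - 3) : ℕ) : ℝ)
      = ((t:ℝ) + 2) * ((n:ℝ) + 3 * r - 3) := by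
    push_cast [Nat.cast_sub (show 3 ≤ n + 3 * r by omega)]; ring
  rw [hc1, hc2] at hlog
  -- conclude linearly
  linarith [hlog, hF1, hF2, hF3, hrt', hlgn2, hlgt0, hr2, hn6, ht1]
end
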